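/- For every n ≥ 1 and k ≥ 0, the monomial slide polynomials {𝔐_a : a a weak composition of length n with a_1+⋯+a_n = k} form a ℤ-basis of the ℤ-module of homogeneous polynomials of degree k in ℤ[x_1,…,x_n]. -/

import Mathlib

open scoped Classical

namespace SlidePaper

/-- Sum of the first `i` entries of a weak composition of length `n`. -/
def psum {n : ℕ} (a : Fin n → ℕ) (i : ℕ) : ℕ :=
  ∑ j ∈ Finset.univ.filter (fun j : Fin n => (j : ℕ) < i), a j

/-- `b` dominates `a`: all partial sums of `b` are at least those of `a`. -/
def Dominates {n : ℕ} (b a : Fin n → ℕ) : Prop :=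
  ∀ i : Fin (n + 1), psum a i ≤ psum b i

/-- The flattening of a weak composition: the list of its nonzero entries in order. -/
def flat {n : ℕ} (a : Fin n → ℕ) : List ℕ :=
  (List.ofFn a).filter (fun x => x ≠ 0)

/-- `β` refines `α`: `β` splits into consecutive blocks with sums `α₁, α₂, …`. -/
def Refines (β α : List ℕ) : Prop :=
  ∃ L : List (List ℕ), L.flatten = β ∧ L.map List.sum = α

/-- All weak compositions of length `n` with entries at most `k`. -/
def wcFinset (n k : ℕ) : Finset (Fin n → ℕ) :=
  Fintype.piFinset fun _ => Finset.range (k + 1)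

/-- The monomial slide polynomial `𝔐_a`. -/
noncomputable def slideM {n : ℕ} (a : Fin n → ℕ) : MvPolynomial (Fin n) ℤ :=
  ∑ b ∈ (wcFinset n (∑ i, a i)).filter (fun b => Dominates b a ∧ flat b = flat a),
    MvPolynomial.monomial (Finsupp.equivFunOnFinite.symm b) 1

/-- The fundamental slide polynomial `𝔉_a`. -/
noncomputable def slideF {n : ℕ} (a : Fin n → ℕ) : MvPolynomial (Fin n) ℤ :=
  ∑ b ∈ (wcFinset n (∑ i, a i)).filter (fun b => Dominates b a ∧ Refines (flat b) (flat a)),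
    MvPolynomial.monomial (Finsupp.equivFunOnFinite.symm b) 1

/-- A weak composition is quasi-flat if its nonzero entries occupy consecutive positions. -/
def QuasiFlat {n : ℕ} (a : Fin n → ℕ) : Prop :=
  ∀ i j l : Fin n, i ≤ j → j ≤ l → a i ≠ 0 → a l ≠ 0 → a j ≠ 0

/-- `b` strongly dominates `a`. -/
def StronglyDominates {n : ℕ} (b a : Fin n → ℕ) : Prop :=
  Dominates b a ∧ ∀ c : Fin n → ℕ, Dominates c a → flat c = flat b → Dominates c b

/-- The exponent vector placing the parts of `α` at the positions `i`. -/
noncomputable def placeExp {n : ℕ} (α : List ℕ) (i : Fin α.length → Fin n) : Fin n →₀ ℕ :=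
  ∑ t : Fin α.length, Finsupp.single (i t) (α.get t)

/-- `f` is quasisymmetric in the variables `x_1, …, x_k` (0-indexed: `x_0, …, x_{k-1}`). -/
def IsQuasisymmetricIn {n : ℕ} (k : ℕ) (f : MvPolynomial (Fin n) ℤ) : Prop :=
  ∀ α : List ℕ, (∀ x ∈ α, 0 < x) →
    ∀ i j : Fin α.length → Fin n, StrictMono i → StrictMono j →
      (∀ t, (i t : ℕ) < k) → (∀ t, (j t : ℕ) < k) →
      MvPolynomial.coeff (placeExp α i) f = MvPolynomial.coeff (placeExp α j) f

/-- The monomial quasisymmetric polynomial `M_α(x_1, …, x_k)` inside `ℤ[x_1, …, x_n]`. -/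
noncomputable def Mqs (n k : ℕ) (α : List ℕ) : MvPolynomial (Fin n) ℤ :=
  ∑ i ∈ (Finset.univ : Finset (Fin α.length → Fin n)).filter
      (fun i : Fin α.length → Fin n => StrictMono i ∧ ∀ t, (i t : ℕ) < k),
    ∏ t : Fin α.length, (MvPolynomial.X (i t) : MvPolynomial (Fin n) ℤ) ^ α.get t

/-- The fundamental quasisymmetric polynomial `F_α(x_1, …, x_k)` inside `ℤ[x_1, …, x_n]`. -/
noncomputable def Fqs (n k : ℕ) (α : List ℕ) : MvPolynomial (Fin n) ℤ :=
  ∑ c ∈ (Finset.univ : Finset (Composition α.sum)).filter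
      (fun c => Refines c.blocks α ∧ c.blocks.length ≤ k),
    Mqs n k c.blocks

/-- Place the weak composition `a` (of length `N`) at offset `k` inside length `M`. -/
def shiftComp {N : ℕ} (k M : ℕ) (a : Fin N → ℕ) : Fin M → ℕ :=
  fun i => if h : k ≤ (i : ℕ) ∧ (i : ℕ) - k < N then a ⟨(i : ℕ) - k, h.2⟩ else 0

/-- Spread the values `g` to positions `ι` inside a weak composition of length `n`. -/
def spread {l n : ℕ} (ι : Fin l → Fin n) (g : Fin l → ℕ) : Fin n → ℕ :=
  fun i => ∑ k, if ι k = i then g k else 0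

/-- The monomial quasisymmetric function `M_α` in infinitely many variables. -/
noncomputable def MqsFun (α : List ℕ) : MvPowerSeries ℕ ℤ :=
  fun d => if ∃ i : Fin α.length → ℕ, StrictMono i ∧
      d = ∑ t : Fin α.length, Finsupp.single (i t) (α.get t) then 1 else 0

/-- The fundamental quasisymmetric function `F_α` in infinitely many variables. -/
noncomputable def FqsFun (α : List ℕ) : MvPowerSeries ℕ ℤ :=
  ∑ c ∈ (Finset.univ : Finset (Composition α.sum)).filter (fun c => Refines c.blocks α),
    MqsFun c.blocks

/-- The cells of the Young diagram of `lam` (French notation): row `r` (from the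
bottom, 0-indexed) has `lam.get r` cells. -/
abbrev Cells (lam : List ℕ) := Σ r : Fin lam.length, Fin (lam.get r)

/-- A filling of `lam` with entries in `{1, …, n}` (encoded as `Fin n`) is a semistandard
Young tableau: rows weakly increase left to right, columns strictly increase bottom to top. -/
def IsSSYT {n : ℕ} {lam : List ℕ} (T : Cells lam → Fin n) : Prop :=
  (∀ (r : Fin lam.length) (c c' : Fin (lam.get r)), c ≤ c' → T ⟨r, c⟩ ≤ T ⟨r, c'⟩) ∧
  (∀ (r r' : Fin lam.length) (c' : Fin (lam.get r')) (h : (c' : ℕ) < lam.get r),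
      (r : ℕ) < (r' : ℕ) → T ⟨r, ⟨c', h⟩⟩ < T ⟨r', c'⟩)

/-- The weight of a filling: the `v`-th entry counts the occurrences of the value `v`. -/
def wtT {n : ℕ} {lam : List ℕ} (T : Cells lam → Fin n) : Fin n → ℕ :=
  fun v => (Finset.univ.filter (fun x : Cells lam => T x = v)).card

/-- A filling is quasi-Yamanouchi if for every value `v > 1`, the leftmost occurrence of `v`
lies weakly left of some occurrence of `v - 1`. -/
def IsQY {n : ℕ} {lam : List ℕ} (T : Cells lam → Fin n) : Prop :=
  ∀ (v : Fin n) (x : Cells lam), T x = v → 0 < (v : ℕ) →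
    (∀ y : Cells lam, T y = v → (x.2 : ℕ) ≤ (y.2 : ℕ)) →
    ∃ z : Cells lam, (T z : ℕ) + 1 = (v : ℕ) ∧ (x.2 : ℕ) ≤ (z.2 : ℕ)

/-- The Schur polynomial `s_lam(x_1, …, x_n)` as the generating function of
semistandard Young tableaux. -/
noncomputable def schurPoly (n : ℕ) (lam : List ℕ) : MvPolynomial (Fin n) ℤ :=
  ∑ T ∈ (Finset.univ : Finset (Cells lam → Fin n)).filter (fun T => IsSSYT T),
    MvPolynomial.monomial (Finsupp.equivFunOnFinite.symm (wtT T)) 1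

/-- One destandardization step on fillings: for some value `v` occurring in `T` whose
leftmost occurrence is strictly right of every occurrence of `v - 1`, every `v` is
decremented to `v - 1`. -/
def TabStep {n : ℕ} {lam : List ℕ} (T T' : Cells lam → Fin n) : Prop :=
  ∃ v : Fin n, 0 < (v : ℕ) ∧ (∃ x, T x = v) ∧
    (∀ x y : Cells lam, T x = v → (T y : ℕ) + 1 = (v : ℕ) → (y.2 : ℕ) < (x.2 : ℕ)) ∧
    ∀ x : Cells lam, (T' x : ℕ) = if T x = v then (v : ℕ) - 1 else (T x : ℕ)

/-- The reading word of a set of crosses: rows are read from top to bottom, each row from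
left to right, the cross in (0-indexed) row `i` and column `j` recording the letter `i + j`
(representing the simple transposition swapping `i + j` and `i + j + 1` of `{0, 1, 2, …}`). -/
def readWord (P : Finset (ℕ × ℕ)) : List ℕ :=
  ((List.range (P.sup Prod.fst + 1)).reverse).flatMap
    (fun i => ((List.range (P.sup Prod.snd + 1)).filter (fun j => decide ((i, j) ∈ P))).map
      (fun j => i + j))

/-- The permutation `s_{i_ℓ} ⋯ s_{i_1}` associated to the word `(i_1, …, i_ℓ)`,
where `s_k` swaps `k` and `k + 1`. -/
def wordPerm (l : List ℕ) : Equiv.Perm ℕ :=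
  ((l.map (fun k => Equiv.swap k (k + 1))).reverse).prod

/-- A word is reduced if no shorter word has the same product. -/
def IsReducedWord (l : List ℕ) : Prop :=
  ∀ l' : List ℕ, wordPerm l' = wordPerm l → l.length ≤ l'.length

/-- `P` is a reduced pipe dream of shape `w`: the pipes trace out `w` and no two pipes
cross more than once, equivalently the reading word of `P` is a reduced word for `w`. -/
def IsPD (w : Equiv.Perm ℕ) (P : Finset (ℕ × ℕ)) : Prop :=
  wordPerm (readWord P) = w ∧ IsReducedWord (readWord P)

/-- `P` is a quasi-Yamanouchi pipe dream of shape `w`: for every row, the westernmost cross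
is in the first column or lies weakly west of some cross in the row above. -/
def IsQPD (w : Equiv.Perm ℕ) (P : Finset (ℕ × ℕ)) : Prop :=
  IsPD w P ∧ ∀ i j : ℕ, (i, j) ∈ P → (∀ j', (i, j') ∈ P → j ≤ j') →
    (j = 0 ∨ ∃ j', (i + 1, j') ∈ P ∧ j ≤ j')

/-- One destandardization step on pipe dreams: a row with no cross in the first column,
all of whose crosses lie strictly east of every cross in the row above, has all its
crosses moved one step northwest. -/
def PDStep (P P' : Finset (ℕ × ℕ)) : Prop :=
  ∃ r : ℕ, (∃ j, (r, j) ∈ P) ∧ (r, 0) ∉ P ∧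
    (∀ j j', (r, j) ∈ P → (r + 1, j') ∈ P → j' < j) ∧
    P' = P.filter (fun p => p.1 ≠ r) ∪
      (P.filter (fun p => p.1 = r)).image (fun p => (r + 1, p.2 - 1))

/-- The number of crosses of `P` in (0-indexed) row `i`. -/
def rowWt (P : Finset (ℕ × ℕ)) (i : ℕ) : ℕ := (P.filter (fun p => p.1 = i)).card

/-- The weight of a pipe dream, as a weak composition of length `n`. -/
def wtFin (n : ℕ) (P : Finset (ℕ × ℕ)) : Fin n → ℕ := fun i => rowWt P (i : ℕ)

/-- The flattened weight of a pipe dream: the list of nonzero row counts, bottom row first. -/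
def flatWt (P : Finset (ℕ × ℕ)) : List ℕ :=
  ((List.range (P.sup Prod.fst + 1)).map (rowWt P)).filter (fun x => x ≠ 0)

/-- The Schubert polynomial of `w` in the variables `x_1, …, x_n`, as the generating
function of reduced pipe dreams of shape `w`. -/
noncomputable def SchubertPoly (n : ℕ) (w : Equiv.Perm ℕ) : MvPolynomial (Fin n) ℤ :=
  ∑ᶠ P ∈ {P : Finset (ℕ × ℕ) | IsPD w P},
    MvPolynomial.monomial (Finsupp.equivFunOnFinite.symm (wtFin n P)) 1

/-- The Lehmer code of `w` (0-indexed): `lehmer w i` counts `j > i` with `w j < w i`. -/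
noncomputable def lehmer (w : Equiv.Perm ℕ) (i : ℕ) : ℕ :=
  Set.ncard {j : ℕ | i < j ∧ w j < w i}

/-- The Lehmer code of `w` as a weak composition of length `n`. -/
noncomputable def lehmerFin (n : ℕ) (w : Equiv.Perm ℕ) : Fin n → ℕ :=
  fun i => lehmer w (i : ℕ)

/-- The number of inversions of `w`. -/
noncomputable def invCount (w : Equiv.Perm ℕ) : ℕ :=
  Set.ncard {p : ℕ × ℕ | p.1 < p.2 ∧ w p.2 < w p.1}

/-- The largest entry of the Lehmer code of `w`. -/
noncomputable def maxLehmer (w : Equiv.Perm ℕ) : ℕ :=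
  sSup (Set.range (lehmer w))

/-- The (0-indexed) position of the first descent of `w`. -/
noncomputable def firstDescent (w : Equiv.Perm ℕ) : ℕ :=
  sInf {i : ℕ | w (i + 1) < w i}

/-- `δ(w) = 1` if every position attaining `max(L(w))` is at or before the first descent,
and `δ(w) = 0` otherwise. -/
noncomputable def delta (w : Equiv.Perm ℕ) : ℤ :=
  if ∀ i : ℕ, lehmer w i = maxLehmer w → i ≤ firstDescent w then 1 else 0

/-- `η(w) = inv(w) − max(L(w)) + δ(w) − min{i : w_i > w_{i+1}}`. -/
noncomputable def eta (w : Equiv.Perm ℕ) : ℤ :=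
  (invCount w : ℤ) - (maxLehmer w : ℤ) + delta w - ((firstDescent w : ℤ) + 1)

/-- The decomposition of a list into maximal strictly increasing runs. -/
def runsStrict : List ℕ → List (List ℕ)
  | [] => []
  | x :: rest =>
    match runsStrict rest, rest with
    | r :: rs, y :: _ => if x < y then (x :: r) :: rs else [x] :: r :: rs
    | _, _ => [[x]]

/-- The descent composition of a word: lengths of its maximal increasing runs, a new run
beginning whenever a letter is followed by a weakly smaller letter. -/
def desStrict (l : List ℕ) : List ℕ := (runsStrict l).map List.length

/-- The decomposition of a list into maximal weakly increasing runs. -/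
def runsWeak : List ℕ → List (List ℕ)
  | [] => []
  | x :: rest =>
    match runsWeak rest, rest with
    | r :: rs, y :: _ => if x ≤ y then (x :: r) :: rs else [x] :: r :: rs
    | _, _ => [[x]]

/-- The descent composition of a word: the lengths of its maximal weakly increasing runs. -/
def desComp (l : List ℕ) : List ℕ := (runsWeak l).map List.length

/-- The permutation `1^m × w`, fixing `0, …, m-1` and acting by `w` shifted by `m` above. -/
def shiftPerm (m : ℕ) (w : Equiv.Perm ℕ) : Equiv.Perm ℕ where
  toFun i := if i < m then i else w (i - m) + m
  invFun i := if i < m then i else w.symm (i - m) + m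
  left_inv i := by
    dsimp only
    by_cases h : i < m
    · simp [h]
    · have h2 : ¬ (w (i - m) + m < m) := by omega
      rw [if_neg h, if_neg h2, Nat.add_sub_cancel, Equiv.symm_apply_apply]
      omega
  right_inv i := by
    dsimp only
    by_cases h : i < m
    · simp [h]
    · have h2 : ¬ (w.symm (i - m) + m < m) := by omega
      rw [if_neg h, if_neg h2, Nat.add_sub_cancel, Equiv.apply_symm_apply]
      omega

/-- The quasi-shuffle product of two (strong) compositions, as a multiset of compositions. -/
def qShuffle : List ℕ → List ℕ → Multiset (List ℕ)
  | [], β => {β}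
  | α, [] => {α}
  | a :: α, b :: β =>
      ((qShuffle α (b :: β)).map (a :: ·)) + ((qShuffle (a :: α) β).map (b :: ·)) +
        ((qShuffle α β).map ((a + b) :: ·))
termination_by α β => α.length + β.length
decreasing_by all_goals (simp only [List.length_cons]; omega)

def shuffles : List ℕ → List ℕ → Multiset (List ℕ)
  | [], B => {B}
  | A, [] => {A}
  | x :: A, y :: B =>
      ((shuffles A (y :: B)).map (x :: ·)) + ((shuffles (x :: A) B).map (y :: ·))
termination_by A B => A.length + B.length
decreasing_by all_goals (simp only [List.length_cons]; omega)

/-- The word `(2n-1)^{a_1} (2n-3)^{a_2} ⋯ 1^{a_n}` associated to a weak composition `a`. -/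
def wordA {n : ℕ} (a : Fin n → ℕ) : List ℕ :=
  (List.ofFn (fun i : Fin n => List.replicate (a i) (2 * n - 2 * (i : ℕ) - 1))).flatten

/-- The word `(2n)^{b_1} (2n-2)^{b_2} ⋯ 2^{b_n}` associated to a weak composition `b`. -/
def wordB {n : ℕ} (b : Fin n → ℕ) : List ℕ :=
  (List.ofFn (fun i : Fin n => List.replicate (b i) (2 * n - 2 * (i : ℕ)))).flatten

/-- A list (padded with trailing zeros) dominates a weak composition of length `n`. -/
def DominatesList {n : ℕ} (l : List ℕ) (a : Fin n → ℕ) : Prop :=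
  ∀ i : Fin (n + 1), psum a (i : ℕ) ≤ ((l.take (i : ℕ)).sum)

/-- The number of letters of the `A`-word (the odd letters) in the `k`-th weakly
increasing run of `C`. -/
def runCountA (C : List ℕ) (k : Fin (runsWeak C).length) : ℕ :=
  (((runsWeak C).get k).filter (fun z => z % 2 = 1)).length

/-- The number of letters of the `B`-word (the even letters) in the `k`-th weakly
increasing run of `C`. -/
def runCountB (C : List ℕ) (k : Fin (runsWeak C).length) : ℕ :=
  (((runsWeak C).get k).filter (fun z => z % 2 = 0)).length

/-- The length of the `k`-th weakly increasing run of `C`. -/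
def runLen (C : List ℕ) (k : Fin (runsWeak C).length) : ℕ :=
  ((runsWeak C).get k).length

/-- `c = bump_{(a,b)}(C)`: the unique weak composition of length `n` obtained by inserting
zero parts into `Des(C)` so that the correspondingly placed `Des_A` and `Des_B` dominate
`a` and `b`, minimal in dominance order among all such insertions. -/
def IsBumpS {n : ℕ} (a b : Fin n → ℕ) (C : List ℕ) (c : Fin n → ℕ) : Prop :=
  ∃ ι : Fin (runsWeak C).length → Fin n, StrictMono ι ∧
    c = spread ι (runLen C) ∧
    Dominates (spread ι (runCountA C)) a ∧ Dominates (spread ι (runCountB C)) b ∧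
    ∀ ι' : Fin (runsWeak C).length → Fin n, StrictMono ι' →
      Dominates (spread ι' (runCountA C)) a → Dominates (spread ι' (runCountB C)) b →
      Dominates (spread ι' (runLen C)) c

/-- The multiplicity `[c ∣ a ⧢ b]` of `c` in the slide product of `a` and `b`: the number of
shuffles `C` of the words of `a` and `b` lying in the shuffle set `SS(a,b)` with
`bump_{(a,b)}(C) = c`. -/
noncomputable def slideMult {n : ℕ} (a b c : Fin n → ℕ) : ℕ :=
  Multiset.card ((shuffles (wordA a) (wordB b)).filter
    (fun C => DominatesList ((runsWeak C).map
        (fun r => (r.filter (fun z => z % 2 = 1)).length)) a ∧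
      DominatesList ((runsWeak C).map (fun r => (r.filter (fun z => z % 2 = 0)).length)) b ∧
      IsBumpS a b C c))

/-- Membership in the quasi-shuffle set `QSS(a,b)`: a pair `(γ_a, γ_b)` of weak compositions
of a common length at most `n` with `γ_a ≥ a`, `flat(γ_a) = flat(a)`, `γ_b ≥ b`,
`flat(γ_b) = flat(b)` (after padding with trailing zeros), and all entries of
`γ_a + γ_b` positive. -/
def InQSS {n : ℕ} (a b : Fin n → ℕ) (x : (l : ℕ) × (Fin l → ℕ) × (Fin l → ℕ)) : Prop :=
  x.1 ≤ n ∧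
  Dominates (shiftComp 0 n x.2.1) a ∧ flat x.2.1 = flat a ∧
  Dominates (shiftComp 0 n x.2.2) b ∧ flat x.2.2 = flat b ∧
  ∀ k : Fin x.1, 0 < x.2.1 k + x.2.2 k

/-- `c = bump_{(a,b)}(γ_a, γ_b)`: the unique weak composition `c` of length `n` with
`flat(c) = γ_a + γ_b` whose decomposition `c = c_a + c_b` satisfies `c_a ≥ a` and
`c_b ≥ b`, minimal in dominance order among all such compositions. -/
def IsBumpQ {n : ℕ} (a b : Fin n → ℕ) (x : (l : ℕ) × (Fin l → ℕ) × (Fin l → ℕ))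
    (c : Fin n → ℕ) : Prop :=
  ∃ ι : Fin x.1 → Fin n, StrictMono ι ∧
    c = spread ι (fun k => x.2.1 k + x.2.2 k) ∧
    Dominates (spread ι x.2.1) a ∧ Dominates (spread ι x.2.2) b ∧
    ∀ ι' : Fin x.1 → Fin n, StrictMono ι' →
      Dominates (spread ι' x.2.1) a → Dominates (spread ι' x.2.2) b →
      Dominates (spread ι' (fun k => x.2.1 k + x.2.2 k)) c

/-- The multiplicity `[c ∣ a ⧻ b]` of `c` in the quasi-slide product of `a` and `b`: the
number of pairs in the quasi-shuffle set `QSS(a,b)` whose bump is `c`. -/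
noncomputable def qsMult {n : ℕ} (a b c : Fin n → ℕ) : ℕ :=
  Nat.card {x : (l : ℕ) × (Fin l → ℕ) × (Fin l → ℕ) // InQSS a b x ∧ IsBumpQ a b x c}

/-- The Stanley symmetric function `S_w`. -/
noncomputable def StanleySym (w : Equiv.Perm ℕ) : MvPowerSeries ℕ ℤ :=
  ∑ᶠ l ∈ {l : List ℕ | wordPerm l = w ∧ IsReducedWord l}, FqsFun (desStrict l)

end SlidePaper

/-! The coefficient of `x^c` in `𝔐_a` is `1` if `c ≥ a` and `flat c = flat a`, and `0`
otherwise. The sum of all partial sums strictly increases along the dominance order, so ordering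
weak compositions by it makes the matrix expressing the `𝔐_a` in the monomial basis of the
homogeneous polynomials of degree `k` unitriangular. It has determinant `1`, hence the `𝔐_a`
form a basis as well. -/

theorem List.sum_filter_ne_zero {M : Type*} [AddMonoid M] [DecidableEq M] (l : List M) :
    (l.filter (· ≠ 0)).sum = l.sum := by
  induction l with
  | nil => rfl
  | cons x l ih => by_cases hx : x = 0 <;> simp_all

theorem Matrix.det_eq_one_of_unitriangular {m R α : Type*} [Fintype m] [DecidableEq m]
    [CommRing R] [LinearOrder α] (M : Matrix m m R) (f : m → α) (hdiag : ∀ i, M i i = 1)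
    (hlt : ∀ i j, i ≠ j → M i j ≠ 0 → f i < f j) : M.det = 1 := by
  have hM : M.BlockTriangular f := fun i j hji => by
    by_contra h
    exact (hlt i j (by rintro rfl; exact lt_irrefl _ hji) h).not_gt hji
  have hblock : ∀ a, M.toSquareBlock f a = 1 := fun a => by
    ext ⟨i, hi⟩ ⟨j, hj⟩
    by_cases hij : i = j
    · subst hij
      simp [Matrix.toSquareBlock_def, hdiag]
    · have : M i j = 0 := by
        by_contra h
        exact (hlt i j hij h).ne (hi.trans hj.symm)
      simp [Matrix.toSquareBlock_def, this, hij]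
  simp [hM.det, hblock]

namespace Finsupp

variable (σ : Type*) [Fintype σ] (k : ℕ)

noncomputable def subtypeDegreeEqEquiv :
    {d : σ →₀ ℕ // d.degree = k} ≃ {a : σ → ℕ // ∑ i, a i = k} :=
  equivFunOnFinite.subtypeEquiv fun d => by rw [degree_eq_sum]; rfl

noncomputable instance : Fintype {a : σ → ℕ // ∑ i, a i = k} :=
  have : Finite {d : σ →₀ ℕ // d.degree = k} := (finite_of_degree_eq k).to_subtype
  have := Finite.of_equiv _ (subtypeDegreeEqEquiv σ k)
  Fintype.ofFinite _

end Finsupp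

namespace MvPolynomial

variable (σ R : Type*) [CommSemiring R]

noncomputable def homogeneousMonomialBasis (k : ℕ) :
    Module.Basis {d : σ →₀ ℕ // d.degree = k} R (homogeneousSubmodule σ R k) :=
  (Finsupp.basisSingleOne.map (AddMonoidAlgebra.supportedEquivFinsupp _).symm).map
    (LinearEquiv.ofEq _ _ (homogeneousSubmodule_eq_finsupp_supported σ R k).symm)

variable {σ R}

theorem homogeneousMonomialBasis_repr_apply (k : ℕ) (p : homogeneousSubmodule σ R k)
    (d : {d : σ →₀ ℕ // d.degree = k}) :
    (homogeneousMonomialBasis σ R k).repr p d = (p : MvPolynomial σ R).coeff d :=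
  rfl

end MvPolynomial

namespace SlidePaper

section

variable {n : ℕ}

theorem sum_flat (a : Fin n → ℕ) : (flat a).sum = ∑ i, a i := by
  rw [flat, List.sum_filter_ne_zero, List.sum_ofFn]

theorem psum_succ (a : Fin n → ℕ) (j : Fin n) : psum a (j + 1) = psum a j + a j := by
  have : Finset.univ.filter (fun i : Fin n => (i : ℕ) < j + 1)
      = insert j (Finset.univ.filter (fun i : Fin n => (i : ℕ) < j)) := by
    ext i
    simp only [Finset.mem_filter, Finset.mem_insert, Finset.mem_univ, true_and, Fin.ext_iff]
    omega
  rw [psum, psum, this, Finset.sum_insert (by simp), add_comm]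

theorem eq_of_forall_psum_eq {a b : Fin n → ℕ} (h : ∀ i : Fin (n + 1), psum a i = psum b i) :
    a = b := by
  funext j
  have h₀ := h j.castSucc
  have h₁ := h j.succ
  simp only [Fin.val_castSucc, Fin.val_succ, psum_succ] at h₀ h₁
  omega

theorem dominates_refl (a : Fin n → ℕ) : Dominates a a := fun _ => le_rfl

def psumTotal (a : Fin n → ℕ) : ℕ := ∑ i : Fin (n + 1), psum a i

theorem Dominates.psumTotal_lt {a b : Fin n → ℕ} (h : Dominates b a) (hne : b ≠ a) :
    psumTotal a < psumTotal b := by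
  refine Finset.sum_lt_sum (fun i _ => h i) ?_
  by_contra! hle
  exact hne (eq_of_forall_psum_eq fun i => (le_antisymm (h i) (hle i (Finset.mem_univ i))).symm)

theorem self_mem_wcFinset (a : Fin n → ℕ) : a ∈ wcFinset n (∑ i, a i) := by
  simp only [wcFinset, Fintype.mem_piFinset, Finset.mem_range, Nat.lt_succ_iff]
  exact fun i => Finset.single_le_sum (fun j _ => Nat.zero_le (a j)) (Finset.mem_univ i)

theorem coeff_slideM (a c : Fin n → ℕ) :
    (slideM a).coeff (Finsupp.equivFunOnFinite.symm c) =
      if Dominates c a ∧ flat c = flat a then 1 else 0 := by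
  simp only [slideM, MvPolynomial.coeff_sum, MvPolynomial.coeff_monomial,
    EmbeddingLike.apply_eq_iff_eq, Finset.sum_ite_eq', Finset.mem_filter]
  refine if_congr (and_iff_right_of_imp fun ⟨_, hflat⟩ => ?_) rfl rfl
  rw [← sum_flat a, ← hflat, sum_flat]
  exact self_mem_wcFinset c

theorem slideM_isHomogeneous (a : Fin n → ℕ) : (slideM a).IsHomogeneous (∑ i, a i) := by
  intro d hd
  rw [← Finsupp.equivFunOnFinite_symm_coe d, coeff_slideM] at hd
  have hdeg : d.degree = ∑ i, a i := by
    rw [Finsupp.degree_eq_sum, ← sum_flat, (ite_ne_right_iff.mp hd).1.2, sum_flat]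
  rwa [Finsupp.degree_eq_weight_one] at hdeg

variable (n) (k : ℕ)

noncomputable def monomialBasis :
    Module.Basis {a : Fin n → ℕ // ∑ i, a i = k} ℤ
      (MvPolynomial.homogeneousSubmodule (Fin n) ℤ k) :=
  (MvPolynomial.homogeneousMonomialBasis (Fin n) ℤ k).reindex
    (Finsupp.subtypeDegreeEqEquiv (Fin n) k)

noncomputable def homogeneousSlideM (a : {a : Fin n → ℕ // ∑ i, a i = k}) :
    MvPolynomial.homogeneousSubmodule (Fin n) ℤ k :=
  ⟨slideM a.1, by simpa only [MvPolynomial.mem_homogeneousSubmodule, a.2] using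
    slideM_isHomogeneous a.1⟩

theorem monomialBasis_toMatrix_homogeneousSlideM (c a : {a : Fin n → ℕ // ∑ i, a i = k}) :
    (monomialBasis n k).toMatrix (homogeneousSlideM n k) c a =
      if Dominates c.1 a.1 ∧ flat c.1 = flat a.1 then 1 else 0 := by
  rw [Module.Basis.toMatrix_apply, monomialBasis, Module.Basis.repr_reindex_apply,
    MvPolynomial.homogeneousMonomialBasis_repr_apply]
  exact coeff_slideM a.1 c.1

theorem det_monomialBasis_homogeneousSlideM :
    (monomialBasis n k).det (homogeneousSlideM n k) = 1 := by
  rw [Module.Basis.det_apply]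
  refine Matrix.det_eq_one_of_unitriangular _ (fun a => OrderDual.toDual (psumTotal a.1))
    (fun a => ?_) (fun c a hne h => ?_)
  · rw [monomialBasis_toMatrix_homogeneousSlideM, if_pos ⟨dominates_refl _, rfl⟩]
  · rw [monomialBasis_toMatrix_homogeneousSlideM] at h
    exact (ite_ne_right_iff.mp h).1.1.psumTotal_lt (Subtype.coe_ne_coe.mpr hne)

end

theorem monomialSlide_basis_general (n k : ℕ) :
    ∃ B : Module.Basis {a : Fin n → ℕ // ∑ i, a i = k} ℤ
        (MvPolynomial.homogeneousSubmodule (Fin n) ℤ k),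
      ∀ a : {a : Fin n → ℕ // ∑ i, a i = k},
        (B a : MvPolynomial (Fin n) ℤ) = slideM a.val := by
  obtain ⟨hli, hspan⟩ := (monomialBasis n k).is_basis_iff_det.mpr
    (det_monomialBasis_homogeneousSlideM n k ▸ isUnit_one)
  exact ⟨.mk hli hspan.ge, fun a => by rw [Module.Basis.mk_apply]; rfl⟩

/-- the monomial slide polynomials indexed by weak compositions of length `n`
and size `k` form a `ℤ`-basis of the homogeneous polynomials of degree `k`. -/
theorem monomialSlide_basis (n k : ℕ) (hn : 1 ≤ n) :
    ∃ B : Module.Basis {a : Fin n → ℕ // ∑ i, a i = k} ℤ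
        (MvPolynomial.homogeneousSubmodule (Fin n) ℤ k),
      ∀ a : {a : Fin n → ℕ // ∑ i, a i = k},
        (B a : MvPolynomial (Fin n) ℤ) = slideM a.val :=
  monomialSlide_basis_general n k

end SlidePaper
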